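/- Let f : ℝ^n → ℝ be differentiable and satisfy the local Regularity Condition RC(μ,λ,ε) with constants μ, λ, ε > 0 at a local minimizer x⋆ (so ⟨∇f(z), z − x⋆⟩ ≥ (μ/2)‖∇f(z)‖² + (λ/2)‖z − x⋆‖² for all z ∈ N_ε(x⋆) := {z : ‖z − x⋆‖ ≤ ε‖x⋆‖}, and ∇f(x⋆) = 0). Consider the general accelerated gradient method with parameters α > 0 and β₁, β₂ ∈ [0,1): y_k = (1 + β₂)z_k − β₂z_{k−1}, z_{k+1} = (1 + β₁)z_k − β₁z_{k−1} − α∇f(y_k), with system matrices A = [[1 + β₁, −β₁],[1, 0]], B = [−α; 0], C = [1 + β₂, −β₂], D = 0, state φ_k = (z_k, z_{k−1}) ∈ ℝ^{2n} and fixed point φ⋆ = (x⋆, x⋆). Suppose there exist a symmetric positive definite P ∈ ℝ^{2×2} and ρ ∈ (0,1) such that [[AᵀPA − ρ²P, AᵀPB],[BᵀPA, BᵀPB]] + [[C, D],[0_{1×2}, 1]]ᵀ [[−λ, 1],[1, −μ]] [[C, D],[0_{1×2}, 1]] ⪯ 0. If z₋₁, z₀ ∈ N_{ε/√(10·cond(P))}(x⋆),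 then for all k ≥ 0, ‖φ_k − φ⋆‖ ≤ √(cond(P)) ρ^k ‖φ₀ − φ⋆‖; in particular z_k converges linearly to x⋆. -/

import Mathlib

open Matrix InnerProductSpace

/-!
Track the Lyapunov function `V_k = (φ_k - φ⋆)ᵀ (P ⊗ Iₙ) (φ_k - φ⋆)`. Testing the LMI coordinatewise
against `(φ_k - φ⋆, ∇f(y_k))` gives `V_{k+1} ≤ ρ² V_k + σ_k`, where
`σ_k = λ‖y_k - x⋆‖² - 2⟪∇f(y_k), y_k - x⋆⟫ + μ‖∇f(y_k)‖²` is `≤ 0` by RC as long as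
`y_k ∈ N_ε(x⋆)`. Since `λ_min(P)‖·‖² ≤ V ≤ λ_max(P)‖·‖²`, the decrease `V_k ≤ V_0` propagates to
`‖y_k - x⋆‖² ≤ 5‖φ_k - φ⋆‖² ≤ 5 cond(P) ‖φ_0 - φ⋆‖² ≤ ε²‖x⋆‖²`, which closes the induction.
-/

namespace Matrix.IsHermitian

open scoped MatrixOrder

variable {m : Type*} [Fintype m] [DecidableEq m] {P : Matrix m m ℝ} (hP : P.IsHermitian)
include hP

lemma iInf_eigenvalues_mul_dotProduct_le (x : m → ℝ) :
    (⨅ i, hP.eigenvalues i) * (x ⬝ᵥ x) ≤ x ⬝ᵥ P *ᵥ x := by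
  have hle : algebraMap ℝ (Matrix m m ℝ) (⨅ i, hP.eigenvalues i) ≤ P := by
    rw [algebraMap_le_iff_le_spectrum hP.isSelfAdjoint, hP.spectrum_real_eq_range_eigenvalues]
    rintro _ ⟨i, rfl⟩
    exact ciInf_le (Set.finite_range _).bddBelow i
  have h := (Matrix.le_iff.mp hle).dotProduct_mulVec_nonneg x
  simp only [Algebra.algebraMap_eq_smul_one, sub_mulVec, smul_mulVec, one_mulVec,
    dotProduct_sub, dotProduct_smul, star_trivial, smul_eq_mul] at h
  linarith

lemma dotProduct_mulVec_le_iSup_eigenvalues_mul (x : m → ℝ) :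
    x ⬝ᵥ P *ᵥ x ≤ (⨆ i, hP.eigenvalues i) * (x ⬝ᵥ x) := by
  have hle : P ≤ algebraMap ℝ (Matrix m m ℝ) (⨆ i, hP.eigenvalues i) := by
    rw [le_algebraMap_iff_spectrum_le hP.isSelfAdjoint, hP.spectrum_real_eq_range_eigenvalues]
    rintro _ ⟨i, rfl⟩
    exact le_ciSup (Set.finite_range _).bddAbove i
  have h := (Matrix.le_iff.mp hle).dotProduct_mulVec_nonneg x
  simp only [Algebra.algebraMap_eq_smul_one, sub_mulVec, smul_mulVec, one_mulVec,
    dotProduct_sub, dotProduct_smul, star_trivial, smul_eq_mul] at h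
  linarith

end Matrix.IsHermitian

lemma Matrix.PosDef.iInf_eigenvalues_pos {m : Type*} [Fintype m] [DecidableEq m] [Nonempty m]
    {P : Matrix m m ℝ} (hP : P.PosDef) : 0 < ⨅ i, hP.1.eigenvalues i := by
  obtain ⟨i, hi⟩ := exists_eq_ciInf_of_finite (f := hP.1.eigenvalues)
  exact (hP.eigenvalues_pos i).trans_eq hi

def stack {m ι : Type*} (w : m → EuclideanSpace ℝ ι) : EuclideanSpace ℝ (m × ι) :=
  WithLp.toLp 2 fun p => w p.1 p.2

section Kronecker

variable {m ι : Type*} [Fintype m] [Fintype ι]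

/-- `ψᵀ (P ⊗ Iₙ) ψ` at `ψ = stack w`. -/
def kronQuadForm (P : Matrix m m ℝ) (w : m → EuclideanSpace ℝ ι) : ℝ :=
  ∑ j, (fun i => w i j) ⬝ᵥ P *ᵥ fun i => w i j

lemma norm_sq_stack (w : m → EuclideanSpace ℝ ι) : ‖stack w‖ ^ 2 = ∑ i, ‖w i‖ ^ 2 := by
  simp only [EuclideanSpace.real_norm_sq_eq, stack, Fintype.sum_prod_type]

lemma norm_sq_stack_eq_sum_dotProduct (w : m → EuclideanSpace ℝ ι) :
    ‖stack w‖ ^ 2 = ∑ j, (fun i => w i j) ⬝ᵥ fun i => w i j := by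
  rw [EuclideanSpace.real_norm_sq_eq, Fintype.sum_prod_type, Finset.sum_comm]
  simp only [stack, dotProduct, sq]

variable [DecidableEq m] {P : Matrix m m ℝ}

lemma Matrix.IsHermitian.iInf_eigenvalues_mul_norm_sq_le_kronQuadForm (hP : P.IsHermitian)
    (w : m → EuclideanSpace ℝ ι) :
    (⨅ i, hP.eigenvalues i) * ‖stack w‖ ^ 2 ≤ kronQuadForm P w := by
  rw [norm_sq_stack_eq_sum_dotProduct, Finset.mul_sum]
  exact Finset.sum_le_sum fun j _ => hP.iInf_eigenvalues_mul_dotProduct_le _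

lemma Matrix.IsHermitian.kronQuadForm_le_iSup_eigenvalues_mul_norm_sq (hP : P.IsHermitian)
    (w : m → EuclideanSpace ℝ ι) :
    kronQuadForm P w ≤ (⨆ i, hP.eigenvalues i) * ‖stack w‖ ^ 2 := by
  rw [norm_sq_stack_eq_sum_dotProduct, Finset.mul_sum]
  exact Finset.sum_le_sum fun j _ => hP.dotProduct_mulVec_le_iSup_eigenvalues_mul _

end Kronecker

lemma stack_pair_sub_stack_const {ι : Type*} (a b c : EuclideanSpace ℝ ι) :
    stack ![a, b] - stack (fun _ => c) = stack ![a - c, b - c] := by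
  ext ⟨i, j⟩
  fin_cases i <;> simp [stack]

section Pair

variable {ι : Type*} [Fintype ι]

lemma norm_sq_stack_pair (a b : EuclideanSpace ℝ ι) :
    ‖stack ![a, b]‖ ^ 2 = ‖a‖ ^ 2 + ‖b‖ ^ 2 := by
  simp [norm_sq_stack, Fin.sum_univ_two]

lemma norm_le_norm_stack_pair (a b : EuclideanSpace ℝ ι) : ‖a‖ ≤ ‖stack ![a, b]‖ := by
  rw [← pow_le_pow_iff_left₀ (norm_nonneg _) (norm_nonneg _) two_ne_zero, norm_sq_stack_pair]
  exact le_add_of_nonneg_right (sq_nonneg _)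

end Pair

lemma norm_sq_extrapolate_le {E : Type*} [SeminormedAddCommGroup E] [NormedSpace ℝ E]
    {β : ℝ} (hβ₀ : 0 ≤ β) (hβ₁ : β ≤ 1) (u v : E) :
    ‖(1 + β) • u - β • v‖ ^ 2 ≤ 5 * (‖u‖ ^ 2 + ‖v‖ ^ 2) := by
  have h : ‖(1 + β) • u - β • v‖ ≤ (1 + β) * ‖u‖ + β * ‖v‖ := by
    refine (norm_sub_le _ _).trans_eq ?_
    rw [norm_smul, norm_smul, Real.norm_of_nonneg (by linarith), Real.norm_of_nonneg hβ₀]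
  have hcoef : (1 + β) ^ 2 + β ^ 2 ≤ 5 := by nlinarith
  calc ‖(1 + β) • u - β • v‖ ^ 2 ≤ ((1 + β) * ‖u‖ + β * ‖v‖) ^ 2 :=
        pow_le_pow_left₀ (norm_nonneg _) h 2
    _ ≤ ((1 + β) ^ 2 + β ^ 2) * (‖u‖ ^ 2 + ‖v‖ ^ 2) := by
        nlinarith [sq_nonneg (β * ‖u‖ - (1 + β) * ‖v‖)]
    _ ≤ 5 * (‖u‖ ^ 2 + ‖v‖ ^ 2) := by gcongr

lemma le_pow_mul_zero_of_le_mul {V : ℕ → ℝ} {c : ℝ} (hc₀ : 0 ≤ c) (hc₁ : c ≤ 1)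
    (hV₀ : 0 ≤ V 0) (hstep : ∀ k, V k ≤ V 0 → V (k + 1) ≤ c * V k) (k : ℕ) :
    V k ≤ c ^ k * V 0 := by
  induction k with
  | zero => simp
  | succ k ih =>
    have hk : V k ≤ V 0 := ih.trans (mul_le_of_le_one_left hV₀ (pow_le_one₀ hc₀ hc₁))
    calc V (k + 1) ≤ c * V k := hstep k hk
      _ ≤ c * (c ^ k * V 0) := mul_le_mul_of_nonneg_left ih hc₀
      _ = c ^ (k + 1) * V 0 := by ring

lemma norm_le_sqrt_div_mul_pow_mul_of_lyapunov {E : Type*} [SeminormedAddCommGroup E]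
    {ψ : ℕ → E} {V : ℕ → ℝ} {a b ρ : ℝ} (ha : 0 < a) (hρ : 0 ≤ ρ)
    (hlo : ∀ k, a * ‖ψ k‖ ^ 2 ≤ V k) (hhi : V 0 ≤ b * ‖ψ 0‖ ^ 2)
    (hdecay : ∀ k, V k ≤ (ρ ^ 2) ^ k * V 0) (k : ℕ) :
    ‖ψ k‖ ≤ √(b / a) * ρ ^ k * ‖ψ 0‖ := by
  have hsq : ‖ψ k‖ ^ 2 ≤ b / a * (ρ ^ k * ‖ψ 0‖) ^ 2 := by
    rw [div_mul_eq_mul_div, le_div_iff₀' ha, mul_pow, ← pow_mul, mul_comm k, pow_mul]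
    calc a * ‖ψ k‖ ^ 2 ≤ (ρ ^ 2) ^ k * V 0 := (hlo k).trans (hdecay k)
      _ ≤ (ρ ^ 2) ^ k * (b * ‖ψ 0‖ ^ 2) := by gcongr
      _ = _ := by ring
  calc ‖ψ k‖ = √(‖ψ k‖ ^ 2) := (Real.sqrt_sq (norm_nonneg _)).symm
    _ ≤ √(b / a * (ρ ^ k * ‖ψ 0‖) ^ 2) := Real.sqrt_le_sqrt hsq
    _ = √(b / a) * ρ ^ k * ‖ψ 0‖ := by
      rw [Real.sqrt_mul' _ (sq_nonneg _), Real.sqrt_sq (by positivity), mul_assoc]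

lemma five_mul_mul_sq_add_sq_le {κ c t a b : ℝ} (hκ : 0 < κ)
    (ha₀ : 0 ≤ a) (hb₀ : 0 ≤ b) (ha : a ≤ c / √(10 * κ) * t) (hb : b ≤ c / √(10 * κ) * t) :
    5 * (κ * (a ^ 2 + b ^ 2)) ≤ (c * t) ^ 2 := by
  have hsq : (c / √(10 * κ) * t) ^ 2 = (c * t) ^ 2 / (10 * κ) := by
    rw [div_mul_eq_mul_div, div_pow, Real.sq_sqrt (by positivity)]
  have ha2 := pow_le_pow_left₀ ha₀ ha 2
  have hb2 := pow_le_pow_left₀ hb₀ hb 2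
  rw [hsq, le_div_iff₀ (by positivity)] at ha2 hb2
  linarith

/-- The matrix of the LMI for `A = [1 + β₁, -β₁; 1, 0]`, `B = [-α; 0]`, `C = [1 + β₂, -β₂]`,
`D = 0` and the sector `[-λ, 1; 1, -μ]` of RC(μ, λ); the LMI asks it to be `⪯ 0`. -/
def agdLMIMatrix (P : Matrix (Fin 2) (Fin 2) ℝ) (μ lam α β₁ β₂ ρ : ℝ) :
    Matrix (Fin 2 ⊕ Fin 1) (Fin 2 ⊕ Fin 1) ℝ :=
  fromBlocks
      ((!![1 + β₁, -β₁; 1, 0])ᵀ * P * !![1 + β₁, -β₁; 1, 0] - ρ ^ 2 • P)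
      ((!![1 + β₁, -β₁; 1, 0])ᵀ * P * !![-α; 0])
      ((!![-α; 0])ᵀ * P * !![1 + β₁, -β₁; 1, 0])
      ((!![-α; 0])ᵀ * P * !![-α; 0]) +
    (fromBlocks !![1 + β₂, -β₂] (0 : Matrix (Fin 1) (Fin 1) ℝ) 0
      (1 : Matrix (Fin 1) (Fin 1) ℝ))ᵀ *
    (fromBlocks (-lam • (1 : Matrix (Fin 1) (Fin 1) ℝ)) (1 : Matrix (Fin 1) (Fin 1) ℝ)
      (1 : Matrix (Fin 1) (Fin 1) ℝ) (-μ • (1 : Matrix (Fin 1) (Fin 1) ℝ))) *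
    (fromBlocks !![1 + β₂, -β₂] (0 : Matrix (Fin 1) (Fin 1) ℝ) 0
      (1 : Matrix (Fin 1) (Fin 1) ℝ))

lemma agd_lmi_dissipation_scalar {P : Matrix (Fin 2) (Fin 2) ℝ} {μ lam α β₁ β₂ ρ : ℝ}
    (hLMI : (-agdLMIMatrix P μ lam α β₁ β₂ ρ).PosSemidef) (s t u : ℝ) :
    ![(1 + β₁) * s - β₁ * t - α * u, s] ⬝ᵥ P *ᵥ ![(1 + β₁) * s - β₁ * t - α * u, s] ≤
      ρ ^ 2 * (![s, t] ⬝ᵥ P *ᵥ ![s, t]) +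
        (lam * ((1 + β₂) * s - β₂ * t) ^ 2 - 2 * ((1 + β₂) * s - β₂ * t) * u + μ * u ^ 2) := by
  have h := hLMI.dotProduct_mulVec_nonneg (Sum.elim ![s, t] ![u])
  simp only [agdLMIMatrix, dotProduct, mulVec, Fintype.sum_sum_type, Fin.sum_univ_two,
    Fin.sum_univ_one, Matrix.neg_apply, Matrix.add_apply, fromBlocks_apply₁₁,
    fromBlocks_apply₁₂, fromBlocks_apply₂₁, fromBlocks_apply₂₂,
    mul_apply, transpose_apply, Matrix.sub_apply, Matrix.smul_apply,
    one_apply, Matrix.zero_apply, Sum.elim_inl, Sum.elim_inr, star_trivial,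
    cons_val_zero, cons_val_one, smul_eq_mul, of_apply, cons_val', empty_val', cons_val_fin_one, if_true] at h
  simp only [dotProduct, mulVec, Fin.sum_univ_two, cons_val_zero, cons_val_one]
  linear_combination h

lemma agd_lmi_dissipation {ι : Type*} [Fintype ι] {P : Matrix (Fin 2) (Fin 2) ℝ}
    {μ lam α β₁ β₂ ρ : ℝ}
    (hLMI : (-agdLMIMatrix P μ lam α β₁ β₂ ρ).PosSemidef)
    (a b g : EuclideanSpace ℝ ι) :
    kronQuadForm P ![(1 + β₁) • a - β₁ • b - α • g, a] ≤
      ρ ^ 2 * kronQuadForm P ![a, b] +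
        (lam * ‖(1 + β₂) • a - β₂ • b‖ ^ 2 - 2 * ⟪g, (1 + β₂) • a - β₂ • b⟫_ℝ +
          μ * ‖g‖ ^ 2) := by
  have h := Finset.sum_le_sum fun j (_ : j ∈ Finset.univ) =>
    agd_lmi_dissipation_scalar hLMI (a j) (b j) (g j)
  have hpair (u v : EuclideanSpace ℝ ι) (j : ι) : (fun i => (![u, v] i) j) = ![u j, v j] := by
    ext i; fin_cases i <;> rfl
  simp only [kronQuadForm, hpair, EuclideanSpace.real_norm_sq_eq, PiLp.inner_apply,
    PiLp.sub_apply, PiLp.smul_apply, smul_eq_mul, RCLike.inner_apply, conj_trivial]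
  refine h.trans_eq ?_
  simp only [Finset.mul_sum, ← Finset.sum_sub_distrib, ← Finset.sum_add_distrib]
  exact Finset.sum_congr rfl fun j _ => by ring

lemma agd_kronQuadForm_succ_le {ι : Type*} [Fintype ι] {P : Matrix (Fin 2) (Fin 2) ℝ}
    {μ lam α β₁ β₂ ρ : ℝ}
    (hLMI : (-agdLMIMatrix P μ lam α β₁ β₂ ρ).PosSemidef)
    {x z₀ z₁ z₂ y g : EuclideanSpace ℝ ι}
    (hy : y = (1 + β₂) • z₁ - β₂ • z₀) (hz : z₂ = (1 + β₁) • z₁ - β₁ • z₀ - α • g)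
    (hsector : ⟪g, y - x⟫_ℝ ≥ μ / 2 * ‖g‖ ^ 2 + lam / 2 * ‖y - x‖ ^ 2) :
    kronQuadForm P ![z₂ - x, z₁ - x] ≤ ρ ^ 2 * kronQuadForm P ![z₁ - x, z₀ - x] := by
  have h := agd_lmi_dissipation hLMI (z₁ - x) (z₀ - x) g
  rw [show (1 + β₁) • (z₁ - x) - β₁ • (z₀ - x) - α • g = z₂ - x by rw [hz]; module,
    show (1 + β₂) • (z₁ - x) - β₂ • (z₀ - x) = y - x by rw [hy]; module] at h
  linarith

theorem agd_local_RC_linear_convergence_general {n : ℕ}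
    (f : EuclideanSpace ℝ (Fin n) → ℝ)
    (μ lam ε : ℝ) (hε : 0 < ε)
    (xs : EuclideanSpace ℝ (Fin n))
    (hRC : ∀ z : EuclideanSpace ℝ (Fin n), ‖z - xs‖ ≤ ε * ‖xs‖ →
      ⟪gradient f z, z - xs⟫_ℝ ≥ μ / 2 * ‖gradient f z‖ ^ 2 + lam / 2 * ‖z - xs‖ ^ 2)
    (α β₁ β₂ : ℝ)
    (hβ₂ : β₂ ∈ Set.Ico (0 : ℝ) 1)
    (z y : ℕ → EuclideanSpace ℝ (Fin n))
    (hy : ∀ k, y k = (1 + β₂) • z (k + 1) - β₂ • z k)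
    (hz : ∀ k, z (k + 2) = (1 + β₁) • z (k + 1) - β₁ • z k - α • gradient f (y k))
    (φ : ℕ → EuclideanSpace ℝ (Fin 2 × Fin n))
    (hφ : ∀ k, φ k = WithLp.toLp 2 (fun p : Fin 2 × Fin n => ![z (k + 1), z k] p.1 p.2))
    (φs : EuclideanSpace ℝ (Fin 2 × Fin n))
    (hφs : φs = WithLp.toLp 2 (fun p : Fin 2 × Fin n => xs p.2))
    (P : Matrix (Fin 2) (Fin 2) ℝ) (hP : P.IsHermitian) (hPpos : P.PosDef)
    (ρ : ℝ) (hρ : ρ ∈ Set.Ioo (0 : ℝ) 1)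
    (hLMI : (-(fromBlocks
        ((!![1 + β₁, -β₁; 1, 0])ᵀ * P * !![1 + β₁, -β₁; 1, 0] - ρ ^ 2 • P)
        ((!![1 + β₁, -β₁; 1, 0])ᵀ * P * !![-α; 0])
        ((!![-α; 0])ᵀ * P * !![1 + β₁, -β₁; 1, 0])
        ((!![-α; 0])ᵀ * P * !![-α; 0]) +
      (fromBlocks !![1 + β₂, -β₂] (0 : Matrix (Fin 1) (Fin 1) ℝ) 0
        (1 : Matrix (Fin 1) (Fin 1) ℝ))ᵀ *
      (fromBlocks (-lam • (1 : Matrix (Fin 1) (Fin 1) ℝ)) (1 : Matrix (Fin 1) (Fin 1) ℝ)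
        (1 : Matrix (Fin 1) (Fin 1) ℝ) (-μ • (1 : Matrix (Fin 1) (Fin 1) ℝ))) *
      (fromBlocks !![1 + β₂, -β₂] (0 : Matrix (Fin 1) (Fin 1) ℝ) 0
        (1 : Matrix (Fin 1) (Fin 1) ℝ)))).PosSemidef)
    (hinit0 : ‖z 0 - xs‖ ≤
      ε / Real.sqrt (10 * ((⨆ i, hP.eigenvalues i) / (⨅ i, hP.eigenvalues i))) * ‖xs‖)
    (hinit1 : ‖z 1 - xs‖ ≤
      ε / Real.sqrt (10 * ((⨆ i, hP.eigenvalues i) / (⨅ i, hP.eigenvalues i))) * ‖xs‖) :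
    ∀ k, ‖φ k - φs‖ ≤
        Real.sqrt ((⨆ i, hP.eigenvalues i) / (⨅ i, hP.eigenvalues i)) * ρ ^ k * ‖φ 0 - φs‖ ∧
      ‖z (k + 1) - xs‖ ≤
        Real.sqrt ((⨆ i, hP.eigenvalues i) / (⨅ i, hP.eigenvalues i)) * ρ ^ k * ‖φ 0 - φs‖ := by
  obtain ⟨hβ₂₀, hβ₂₁⟩ := hβ₂
  obtain ⟨hρ₀, hρ₁⟩ := hρ
  set lmin := ⨅ i, hP.eigenvalues i
  set lmax := ⨆ i, hP.eigenvalues i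
  have hlmin : 0 < lmin := hPpos.iInf_eigenvalues_pos
  have hκ : 0 < lmax / lmin := div_pos (hlmin.trans_le
    (ciInf_le_ciSup (Set.finite_range _).bddBelow (Set.finite_range _).bddAbove)) hlmin
  have he k : φ k - φs = stack ![z (k + 1) - xs, z k - xs] := by
    rw [hφ, hφs]; exact stack_pair_sub_stack_const _ _ _
  have hnorm k : ‖φ k - φs‖ ^ 2 = ‖z (k + 1) - xs‖ ^ 2 + ‖z k - xs‖ ^ 2 := by
    rw [he, norm_sq_stack_pair]
  set V := fun k => kronQuadForm P ![z (k + 1) - xs, z k - xs]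
  have hlo k : lmin * ‖φ k - φs‖ ^ 2 ≤ V k :=
    he k ▸ hP.iInf_eigenvalues_mul_norm_sq_le_kronQuadForm _
  have hhi k : V k ≤ lmax * ‖φ k - φs‖ ^ 2 :=
    he k ▸ hP.kronQuadForm_le_iSup_eigenvalues_mul_norm_sq _
  have hinit : 5 * (lmax / lmin * ‖φ 0 - φs‖ ^ 2) ≤ (ε * ‖xs‖) ^ 2 := by
    rw [hnorm 0]
    exact five_mul_mul_sq_add_sq_le hκ (norm_nonneg _) (norm_nonneg _) hinit1 hinit0
  have hdecay : ∀ k, V k ≤ (ρ ^ 2) ^ k * V 0 := by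
    refine le_pow_mul_zero_of_le_mul (by positivity) (pow_le_one₀ hρ₀.le hρ₁.le)
      ((mul_nonneg hlmin.le (sq_nonneg _)).trans (hlo 0))
      fun k hk => agd_kronQuadForm_succ_le hLMI (hy k) (hz k) (hRC _ ?_)
    have hφk : ‖φ k - φs‖ ^ 2 ≤ lmax / lmin * ‖φ 0 - φs‖ ^ 2 := by
      rw [div_mul_eq_mul_div, le_div_iff₀' hlmin]
      exact (hlo k).trans (hk.trans (hhi 0))
    rw [← pow_le_pow_iff_left₀ (norm_nonneg _) (by positivity) two_ne_zero]
    calc ‖y k - xs‖ ^ 2 = ‖(1 + β₂) • (z (k + 1) - xs) - β₂ • (z k - xs)‖ ^ 2 := by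
          rw [hy]; congr 2; module
      _ ≤ 5 * ‖φ k - φs‖ ^ 2 := by
          rw [hnorm]; exact norm_sq_extrapolate_le hβ₂₀ hβ₂₁.le _ _
      _ ≤ (ε * ‖xs‖) ^ 2 := by linarith
  intro k
  have hφk : ‖φ k - φs‖ ≤ √(lmax / lmin) * ρ ^ k * ‖φ 0 - φs‖ :=
    norm_le_sqrt_div_mul_pow_mul_of_lyapunov (ψ := fun k => φ k - φs) hlmin hρ₀.le hlo (hhi 0)
      hdecay k
  exact ⟨hφk, (he k ▸ norm_le_norm_stack_pair _ _).trans hφk⟩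

/-- Under the local Regularity Condition RC(μ,λ,ε) and a feasible LMI
solution, proper initialization yields linear convergence of the state of the general
accelerated gradient method, and in particular of the iterates `z_k`. -/
theorem agd_local_RC_linear_convergence {n : ℕ}
    (f : EuclideanSpace ℝ (Fin n) → ℝ)
    (μ lam ε : ℝ) (hμ : 0 < μ) (hlam : 0 < lam) (hε : 0 < ε)
    (hdiff : Differentiable ℝ f)
    (xs : EuclideanSpace ℝ (Fin n))
    (hmin : ∀ z, ‖z - xs‖ ≤ ε * ‖xs‖ → f xs ≤ f z)
    (hgrad0 : gradient f xs = 0)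
    (hRC : ∀ z : EuclideanSpace ℝ (Fin n), ‖z - xs‖ ≤ ε * ‖xs‖ →
      ⟪gradient f z, z - xs⟫_ℝ ≥ μ / 2 * ‖gradient f z‖ ^ 2 + lam / 2 * ‖z - xs‖ ^ 2)
    (α β₁ β₂ : ℝ) (hα : 0 < α)
    (hβ₁ : β₁ ∈ Set.Ico (0 : ℝ) 1) (hβ₂ : β₂ ∈ Set.Ico (0 : ℝ) 1)
    (z y : ℕ → EuclideanSpace ℝ (Fin n))
    (hy : ∀ k, y k = (1 + β₂) • z (k + 1) - β₂ • z k)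
    (hz : ∀ k, z (k + 2) = (1 + β₁) • z (k + 1) - β₁ • z k - α • gradient f (y k))
    (φ : ℕ → EuclideanSpace ℝ (Fin 2 × Fin n))
    (hφ : ∀ k, φ k = WithLp.toLp 2 (fun p : Fin 2 × Fin n => ![z (k + 1), z k] p.1 p.2))
    (φs : EuclideanSpace ℝ (Fin 2 × Fin n))
    (hφs : φs = WithLp.toLp 2 (fun p : Fin 2 × Fin n => xs p.2))
    (P : Matrix (Fin 2) (Fin 2) ℝ) (hP : P.IsHermitian) (hPpos : P.PosDef)
    (ρ : ℝ) (hρ : ρ ∈ Set.Ioo (0 : ℝ) 1)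
    (hLMI : (-(fromBlocks
        ((!![1 + β₁, -β₁; 1, 0])ᵀ * P * !![1 + β₁, -β₁; 1, 0] - ρ ^ 2 • P)
        ((!![1 + β₁, -β₁; 1, 0])ᵀ * P * !![-α; 0])
        ((!![-α; 0])ᵀ * P * !![1 + β₁, -β₁; 1, 0])
        ((!![-α; 0])ᵀ * P * !![-α; 0]) +
      (fromBlocks !![1 + β₂, -β₂] (0 : Matrix (Fin 1) (Fin 1) ℝ) 0
        (1 : Matrix (Fin 1) (Fin 1) ℝ))ᵀ *
      (fromBlocks (-lam • (1 : Matrix (Fin 1) (Fin 1) ℝ)) (1 : Matrix (Fin 1) (Fin 1) ℝ)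
        (1 : Matrix (Fin 1) (Fin 1) ℝ) (-μ • (1 : Matrix (Fin 1) (Fin 1) ℝ))) *
      (fromBlocks !![1 + β₂, -β₂] (0 : Matrix (Fin 1) (Fin 1) ℝ) 0
        (1 : Matrix (Fin 1) (Fin 1) ℝ)))).PosSemidef)
    (hinit0 : ‖z 0 - xs‖ ≤
      ε / Real.sqrt (10 * ((⨆ i, hP.eigenvalues i) / (⨅ i, hP.eigenvalues i))) * ‖xs‖)
    (hinit1 : ‖z 1 - xs‖ ≤
      ε / Real.sqrt (10 * ((⨆ i, hP.eigenvalues i) / (⨅ i, hP.eigenvalues i))) * ‖xs‖) :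
    ∀ k, ‖φ k - φs‖ ≤
        Real.sqrt ((⨆ i, hP.eigenvalues i) / (⨅ i, hP.eigenvalues i)) * ρ ^ k * ‖φ 0 - φs‖ ∧
      ‖z (k + 1) - xs‖ ≤
        Real.sqrt ((⨆ i, hP.eigenvalues i) / (⨅ i, hP.eigenvalues i)) * ρ ^ k * ‖φ 0 - φs‖ :=
  agd_local_RC_linear_convergence_general f μ lam ε hε xs hRC α β₁ β₂ hβ₂ z y hy hz φ hφ φs hφs P hP
    hPpos ρ hρ hLMI hinit0 hinit1
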